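/- Let T be the 8×8 column-stochastic transition matrix of the 3-qubit repetition code Markov chain with syndrome-flip probability p ∈ (0,1) (as given in the paper). For m ≥ 1 let q_m denote the polarization obtained from initial distribution concentrated on |000⟩ minus |111⟩ and readout by majority vote after m steps. Then q_1 = 1 (no logical error after one round) but q_2 < 1. -/

import Mathlib

namespace Stmt17

/-- States of the classical Markov chain: the 8 computational basis states of
three bits. -/
abbrev St := Fin 3 → ZMod 2

/-- Syndromes: the parities measured by `ZZI` and `IZZ`. -/
abbrev Syn := ZMod 2 × ZMod 2

/-- The (perfect) syndrome of a state. -/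
def synOf (v : St) : Syn := (v 0 + v 1, v 1 + v 2)

/-- The bit flips effected by the corrections: `R(0,0)` flips nothing,
`R(1,0)` flips bit 1, `R(0,1)` flips bit 3, `R(1,1)` flips bit 2. -/
def corrFlip (s : Syn) (v : St) : St :=
  if s = (0, 0) then v
  else if s = (1, 0) then Function.update v 0 (v 0 + 1)
  else if s = (0, 1) then Function.update v 2 (v 2 + 1)
  else Function.update v 1 (v 1 + 1)

/-- Hamming distance between two 2-bit syndromes. -/
def ham (s s' : Syn) : ℕ :=
  (if s.1 = s'.1 then 0 else 1) + (if s.2 = s'.2 then 0 else 1)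

/-- Probability of reading syndrome `s'` when the true syndrome is `s`, with
independent ancilla flip probability `p`. -/
def chi (p : ℝ) (s s' : Syn) : ℝ := (1 - p)^(2 - ham s s') * p^(ham s s')

/-- The 8×8 column-stochastic transition matrix of one noisy QEC round:
from state `v` (true syndrome `synOf v`), the measured syndrome is `s'` with
probability `χ(synOf v, s')` and the corresponding correction is applied. -/
noncomputable def T (p : ℝ) : Matrix St St ℝ :=
  Matrix.of fun w v => ∑ s' : Syn, if w = corrFlip s' v then chi p (synOf v) s' else 0

/-- Majority-vote readout: `+1` if the majority of the three bits is `0`,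
`-1` otherwise. -/
def maj (v : St) : ℝ :=
  if (Finset.univ.filter fun i => v i = 1).card ≤ 1 then 1 else -1

/-- Polarization after `m` rounds: the expected majority-vote readout starting
from `|000⟩` minus that starting from `|111⟩`, divided by 2. -/
noncomputable def q (p : ℝ) (m : ℕ) : ℝ :=
  ((∑ v : St, maj v * (T p ^ m) v (fun _ => 0)) -
    (∑ v : St, maj v * (T p ^ m) v (fun _ => 1))) / 2

/-! Flipping all three bits commutes with the chain and negates the majority readout, so `q p m`
is the expected readout after `m` rounds started from `|000⟩`. From `|000⟩` one round applies a
single correction `R(s)`, which majority vote tolerates, so `q p 1 = 1`. The expected readout one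
round after reaching `R(s)|000⟩` is `(1 - 2p)^|s|`, hence `q p 2 = ((1 - p) + p (1 - 2p))² =
(1 - 2p²)² < 1`: a misread syndrome in the second round can apply a correction to a different
bit than the first, leaving two flipped bits. -/

open Matrix

lemma sum_zmod_two {M : Type*} [AddCommMonoid M] (f : ZMod 2 → M) : ∑ x, f x = f 0 + f 1 :=
  Fin.sum_univ_two f

lemma synOf_add (v w : St) : synOf (v + w) = synOf v + synOf w :=
  Prod.ext (by simp only [synOf, Pi.add_apply, Prod.fst_add]; ring)
    (by simp only [synOf, Pi.add_apply, Prod.snd_add]; ring)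

lemma corrFlip_add (s : Syn) (v w : St) : corrFlip s (v + w) = corrFlip s v + w := by
  unfold corrFlip
  split_ifs <;> ext i <;> fin_cases i <;> simp [Function.update] <;> ring

lemma synOf_corrFlip (s : Syn) (v : St) : synOf (corrFlip s v) = synOf v + s := by
  have h : ∀ s : Syn, synOf (corrFlip s 0) = s := by decide
  rw [← zero_add v, corrFlip_add, synOf_add, h, zero_add, add_comm]

lemma maj_add_one (v : St) : maj (v + 1) = -maj v := by
  have h : ∀ v : St, ((Finset.univ.filter fun i => (v + 1) i = 1).card ≤ 1 ↔
      ¬(Finset.univ.filter fun i => v i = 1).card ≤ 1) := by decide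
  simp only [maj, h v]
  split_ifs <;> norm_num

lemma maj_corrFlip_zero (s : Syn) : maj (corrFlip s 0) = 1 := by
  have h : ∀ s : Syn, (Finset.univ.filter fun i => corrFlip s 0 i = 1).card ≤ 1 := by decide
  simp [maj, h s]

lemma maj_corrFlip_corrFlip_zero (s s' : Syn) :
    maj (corrFlip s' (corrFlip s 0)) = if s ≠ 0 ∧ s' ≠ 0 ∧ s ≠ s' then -1 else 1 := by
  have h : ∀ s s' : Syn, ((Finset.univ.filter fun i => corrFlip s' (corrFlip s 0) i = 1).card ≤ 1
      ↔ ¬(s ≠ 0 ∧ s' ≠ 0 ∧ s ≠ s')) := by decide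
  simp only [maj, h s s']
  split_ifs <;> rfl

lemma chi_mk (p : ℝ) (s : Syn) (a b : ZMod 2) :
    chi p s (a, b) = (if s.1 = a then 1 - p else p) * (if s.2 = b then 1 - p else p) := by
  unfold chi ham
  split_ifs <;> simp <;> ring

lemma sum_chi (p : ℝ) (s : Syn) : ∑ s', chi p s s' = 1 := by
  have h : ∀ a : ZMod 2, ∑ b : ZMod 2, (if a = b then 1 - p else p) = 1 := by
    intro a
    obtain rfl | rfl : a = 0 ∨ a = 1 := by revert a; decide
    all_goals simp [sum_zmod_two]
  rw [Fintype.sum_prod_type]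
  simp only [chi_mk, ← Finset.mul_sum, h, mul_one]

lemma vecMul_T_apply (p : ℝ) (f : St → ℝ) (v : St) :
    (f ᵥ* T p) v = ∑ s', chi p (synOf v) s' * f (corrFlip s' v) := by
  simp only [vecMul, dotProduct, T, of_apply, Finset.mul_sum, mul_ite, mul_zero]
  rw [Finset.sum_comm]
  simp [mul_comm]

lemma T_add_add (p : ℝ) {c : St} (hc : synOf c = 0) (w v : St) :
    T p (w + c) (v + c) = T p w v := by
  simp [T, synOf_add, hc, corrFlip_add]

lemma T_pow_add_add (p : ℝ) {c : St} (hc : synOf c = 0) (m : ℕ) (w v : St) :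
    (T p ^ m) (w + c) (v + c) = (T p ^ m) w v := by
  induction m generalizing w with
  | zero => simp [one_apply]
  | succ m ih =>
    simp only [pow_succ', mul_apply]
    rw [← Equiv.sum_comp (Equiv.addRight c)]
    simp [T_add_add p hc, ih]

lemma q_eq_maj_vecMul_T_pow (p : ℝ) (m : ℕ) : q p m = (maj ᵥ* T p ^ m) 0 := by
  change (∑ v, maj v * (T p ^ m) v 0 - ∑ v, maj v * (T p ^ m) v (0 + 1)) / 2 = _
  rw [← Equiv.sum_comp (Equiv.addRight (1 : St)) (fun v => maj v * (T p ^ m) v (0 + 1))]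
  simp only [Equiv.coe_addRight, maj_add_one, T_pow_add_add p (c := 1) (by decide)]
  simp only [vecMul, dotProduct, neg_mul, Finset.sum_neg_distrib]
  ring

lemma maj_vecMul_T_zero (p : ℝ) : (maj ᵥ* T p) 0 = 1 := by
  simp [vecMul_T_apply, maj_corrFlip_zero, sum_chi]

lemma maj_vecMul_T_corrFlip_zero (p : ℝ) (s : Syn) :
    (maj ᵥ* T p) (corrFlip s 0) = (1 - 2 * p) ^ ham 0 s := by
  rw [vecMul_T_apply, synOf_corrFlip, Fintype.sum_prod_type]
  simp only [maj_corrFlip_corrFlip_zero, chi_mk, sum_zmod_two]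
  fin_cases s <;> simp +decide [ham] <;> ring

lemma q_one (p : ℝ) : q p 1 = 1 := by
  rw [q_eq_maj_vecMul_T_pow, pow_one, maj_vecMul_T_zero]

lemma q_two (p : ℝ) : q p 2 = (1 - 2 * p ^ 2) ^ 2 := by
  have h0 : synOf 0 = 0 := by decide
  rw [q_eq_maj_vecMul_T_pow, pow_two, ← vecMul_vecMul, vecMul_T_apply, h0]
  simp only [maj_vecMul_T_corrFlip_zero, Fintype.sum_prod_type, chi_mk, sum_zmod_two]
  simp +decide [ham]
  ring

/-- For the 3-qubit repetition code Markov chain with syndrome-flip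
probability `p ∈ (0,1)`, no logical error occurs after one round
(`q 1 = 1`) but after two rounds the polarization has strictly decayed
(`q 2 < 1`). -/
theorem stmt17 (p : ℝ) (hp : 0 < p) (hp1 : p < 1) :
    q p 1 = 1 ∧ q p 2 < 1 := by
  refine ⟨q_one p, ?_⟩
  have hp2 : 0 < p ^ 2 := by positivity
  have hp2' : p ^ 2 < 1 := by nlinarith
  rw [q_two]
  nlinarith

end Stmt17
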